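/- Let d be a |V|×|V| matrix of positive integers (delays) and p a matrix of nonnegative integers (plant delays), and define the constraint space S of block transfer matrices whose (i,j) block has delay at least d_{ij} (i.e., coefficients of z^{-k} vanish for k < d_{ij}), and let G₂₂ have (i,j) block with delay at least p_{ij}. If d_{ki} + p_{ij} + d_{jl} ≥ d_{kl} for all i,j,k,l, then S is quadratically invariant with respect to G₂₂: for all K ∈ S, K G₂₂ K ∈ S. -/

import Mathlib

/-!
A block has delay `≥ d` exactly when each of its entries is divisible by `X ^ d`. Divisibility is
preserved by sums and multiplies under products, so every term `K_{ki} G₂₂_{ij} K_{jl}` of block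
`(k,l)` of `K G₂₂ K` is divisible by `X ^ (d_{ki} + p_{ij} + d_{jl})`, hence by `X ^ d_{kl}`.
-/

open Matrix

/-- A block transfer matrix (blocks are n×n matrices of formal power series in z⁻¹)
`M` "has delay ≥ d" in a block when all coefficients of order `< d` of that block vanish. -/
def blockHasDelay {n : ℕ} (M : Matrix (Fin n) (Fin n) (PowerSeries ℝ)) (d : ℕ) : Prop :=
  ∀ k < d, ∀ a b, PowerSeries.coeff (R := ℝ) k (M a b) = 0

theorem Matrix.dvd_mul_apply_of_forall_dvd {R m n o : Type*} [CommSemiring R] [Fintype n]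
    {A : Matrix m n R} {B : Matrix n o R} {x y : R}
    (hA : ∀ i j, x ∣ A i j) (hB : ∀ j k, y ∣ B j k) (i : m) (k : o) :
    x * y ∣ (A * B) i k :=
  Finset.dvd_sum fun j _ => mul_dvd_mul (hA i j) (hB j k)

section blockHasDelay

variable {n : ℕ}

theorem blockHasDelay_iff_X_pow_dvd {M : Matrix (Fin n) (Fin n) (PowerSeries ℝ)} {d : ℕ} :
    blockHasDelay M d ↔ ∀ a b, PowerSeries.X ^ d ∣ M a b := by
  simp only [blockHasDelay, PowerSeries.X_pow_dvd_iff]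
  exact ⟨fun h a b k hk => h k hk a b, fun h k hk a b => h a b k hk⟩

theorem blockHasDelay.mul {A B : Matrix (Fin n) (Fin n) (PowerSeries ℝ)} {d₁ d₂ : ℕ}
    (hA : blockHasDelay A d₁) (hB : blockHasDelay B d₂) : blockHasDelay (A * B) (d₁ + d₂) := by
  rw [blockHasDelay_iff_X_pow_dvd] at hA hB ⊢
  rw [pow_add]
  exact dvd_mul_apply_of_forall_dvd hA hB

theorem blockHasDelay.mono {A : Matrix (Fin n) (Fin n) (PowerSeries ℝ)} {d₁ d₂ : ℕ}
    (hA : blockHasDelay A d₁) (h : d₂ ≤ d₁) : blockHasDelay A d₂ :=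
  fun k hk => hA k (hk.trans_le h)

theorem blockHasDelay_sum {ι : Type*} {s : Finset ι} {M : ι → Matrix (Fin n) (Fin n) (PowerSeries ℝ)}
    {d : ℕ} (h : ∀ i ∈ s, blockHasDelay (M i) d) : blockHasDelay (∑ i ∈ s, M i) d := by
  simp only [blockHasDelay_iff_X_pow_dvd, Matrix.sum_apply] at h ⊢
  exact fun a b => Finset.dvd_sum fun i hi => h i hi a b

end blockHasDelay

theorem stmt_10_general (V n : ℕ) (d : Fin V → Fin V → ℕ) (pd : Fin V → Fin V → ℕ)
    (hineq : ∀ i j k l, d k l ≤ d k i + pd i j + d j l)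
    (K G₂₂ : Matrix (Fin V) (Fin V) (Matrix (Fin n) (Fin n) (PowerSeries ℝ)))
    (hK : ∀ k i, blockHasDelay (K k i) (d k i))
    (hG : ∀ i j, blockHasDelay (G₂₂ i j) (pd i j)) :
    ∀ k l, blockHasDelay ((K * G₂₂ * K) k l) (d k l) := by
  intro k l
  simp only [Matrix.mul_apply, Finset.sum_mul]
  exact blockHasDelay_sum fun j _ => blockHasDelay_sum fun i _ =>
    (((hK k i).mul (hG i j)).mul (hK j l)).mono (hineq i j k l)

/-- Quadratic invariance of delay constraint spaces: if `d_{ki} + p_{ij} + d_{jl} ≥ d_{kl}`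
for all `i,j,k,l`, then for every `K` whose `(k,i)` block has delay ≥ `d_{ki}`, and plant
`G₂₂` whose `(i,j)` block has delay ≥ `p_{ij}`, every `(k,l)` block of `K G₂₂ K` has
delay ≥ `d_{kl}`. -/
theorem stmt_10 (V n : ℕ) (d : Fin V → Fin V → ℕ) (pd : Fin V → Fin V → ℕ)
    (hdpos : ∀ i j, 0 < d i j)
    (hineq : ∀ i j k l, d k l ≤ d k i + pd i j + d j l)
    (K G₂₂ : Matrix (Fin V) (Fin V) (Matrix (Fin n) (Fin n) (PowerSeries ℝ)))
    (hK : ∀ k i, blockHasDelay (K k i) (d k i))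
    (hG : ∀ i j, blockHasDelay (G₂₂ i j) (pd i j)) :
    ∀ k l, blockHasDelay ((K * G₂₂ * K) k l) (d k l) :=
  stmt_10_general V n d pd hineq K G₂₂ hK hG
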